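/- The function f(p) := Σ_{i≠j} p_i p_j (1 + 2/(p_i + p_j)) (with summands interpreted as 0 when p_i + p_j = 0) is concave on the probability simplex in ℝ^d: for any two probability vectors p, q ∈ ℝ^d and any t ∈ [0,1], f(t p + (1−t) q) ≥ t f(p) + (1−t) f(q). -/

import Mathlib

/-- The average steering quantifier `f(p) = Σ_{i≠j} p i * p j * (1 + 2/(p i + p j))`;
summands with `p i + p j = 0` vanish (in Lean, `2/0 = 0` and `p i * p j = 0` then). -/
noncomputable def fAvg {d : ℕ} (p : Fin d → ℝ) : ℝ :=
  ∑ i, ∑ j, if i ≠ j then p i * p j * (1 + 2 / (p i + p j)) else 0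

/-! On the simplex `Σ_{i≠j} p_i p_j = 1 - Σ p_i²`, so
`f(p) = 1 - Σ p_i² + 2 Σ_{i≠j} H(p_i, p_j)` with `H(x, y) = x y / (x + y)`. The first two
terms are concave, and so is `H` on the quadrant `x, y ≥ 0`: there
`H(x, y) = min_l (l² x + (1 - l)² y)`, attained at `l = y / (x + y)`, is a minimum of linear
functions. -/

open Set

theorem ConcaveOn.finset_sum {𝕜 E β ι : Type*} [Semiring 𝕜] [PartialOrder 𝕜]
    [AddCommMonoid E] [AddCommMonoid β] [PartialOrder β] [IsOrderedAddMonoid β] [SMul 𝕜 E]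
    [Module 𝕜 β]
    {s : Set E} (hs : Convex 𝕜 s) (t : Finset ι) {f : ι → E → β}
    (hf : ∀ i ∈ t, ConcaveOn 𝕜 s (f i)) : ConcaveOn 𝕜 s fun x => ∑ i ∈ t, f i x := by
  simp_rw [← Finset.sum_apply]
  exact Finset.sum_induction f (ConcaveOn 𝕜 s) (fun _ _ => ConcaveOn.add)
    (concaveOn_const (0 : β) hs) hf

theorem mul_div_add_le_sq_mul_add_sq {x y : ℝ} (hx : 0 ≤ x) (hy : 0 ≤ y) (l : ℝ) :
    x * y / (x + y) ≤ l ^ 2 * x + (1 - l) ^ 2 * y := by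
  rcases (add_nonneg hx hy).eq_or_lt with hxy | hxy
  · rw [← hxy, div_zero]
    positivity
  · rw [div_le_iff₀ hxy]
    -- `(l² x + (1 - l)² y) (x + y) - x y = (l (x + y) - y)²`
    nlinarith [sq_nonneg (l * (x + y) - y)]

theorem mul_div_add_eq_sq_mul_add_sq {x y : ℝ} (hx : 0 ≤ x) (hy : 0 ≤ y) :
    x * y / (x + y) = (y / (x + y)) ^ 2 * x + (1 - y / (x + y)) ^ 2 * y := by
  rcases (add_nonneg hx hy).eq_or_lt with hxy | hxy
  · obtain rfl : y = 0 := by linarith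
    simp
  · field_simp
    ring

theorem concaveOn_mul_div_add :
    ConcaveOn ℝ (Ici 0) fun z : ℝ × ℝ => z.1 * z.2 / (z.1 + z.2) := by
  refine ⟨convex_Ici 0, fun u hu v hv a b ha hb hab => ?_⟩
  set z := a • u + b • v
  have hz : 0 ≤ z := (convex_Ici 0) hu hv ha hb hab
  set l := z.2 / (z.1 + z.2)
  calc a • (u.1 * u.2 / (u.1 + u.2)) + b • (v.1 * v.2 / (v.1 + v.2))
      ≤ a * (l ^ 2 * u.1 + (1 - l) ^ 2 * u.2) + b * (l ^ 2 * v.1 + (1 - l) ^ 2 * v.2) := by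
        simp only [smul_eq_mul]
        exact add_le_add (mul_le_mul_of_nonneg_left (mul_div_add_le_sq_mul_add_sq hu.1 hu.2 l) ha)
          (mul_le_mul_of_nonneg_left (mul_div_add_le_sq_mul_add_sq hv.1 hv.2 l) hb)
    _ = l ^ 2 * z.1 + (1 - l) ^ 2 * z.2 := by
        simp only [z, Prod.fst_add, Prod.snd_add, Prod.smul_fst, Prod.smul_snd, smul_eq_mul]
        ring
    _ = z.1 * z.2 / (z.1 + z.2) := (mul_div_add_eq_sq_mul_add_sq hz.1 hz.2).symm

theorem concaveOn_sum_mul_div_add {ι : Type*} [Fintype ι] [DecidableEq ι] :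
    ConcaveOn ℝ (Ici 0) fun p : ι → ℝ =>
      ∑ i, ∑ j, if i ≠ j then p i * p j / (p i + p j) else 0 := by
  refine ConcaveOn.finset_sum (convex_Ici 0) _ fun i _ =>
    ConcaveOn.finset_sum (convex_Ici 0) _ fun j _ => ?_
  by_cases hij : i = j
  · simpa [hij] using concaveOn_const (0 : ℝ) (convex_Ici (0 : ι → ℝ))
  · have hpair := concaveOn_mul_div_add.comp_linearMap
      ((LinearMap.proj (R := ℝ) (φ := fun _ : ι => ℝ) i).prod (LinearMap.proj j))
    simp only [ne_eq, hij, not_false_eq_true, if_true]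
    exact hpair.subset (fun p (hp : 0 ≤ p) => ⟨hp i, hp j⟩) (convex_Ici 0)

theorem concaveOn_neg_sum_sq {ι : Type*} [Fintype ι] :
    ConcaveOn ℝ univ fun p : ι → ℝ => -∑ i, p i ^ 2 := by
  simp_rw [← Finset.sum_neg_distrib]
  exact ConcaveOn.finset_sum convex_univ _ fun i _ =>
    ((even_two.convexOn_pow (𝕜 := ℝ)).comp_linearMap
      (LinearMap.proj (R := ℝ) (φ := fun _ : ι => ℝ) i)).neg

theorem fAvg_eq {d : ℕ} (p : Fin d → ℝ) :
    fAvg p = (∑ i, p i) ^ 2 - ∑ i, p i ^ 2 +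
      2 * ∑ i, ∑ j, if i ≠ j then p i * p j / (p i + p j) else 0 := by
  have hsummand (i j : Fin d) :
      (if i ≠ j then p i * p j * (1 + 2 / (p i + p j)) else 0) =
        p i * p j - (if i = j then p i ^ 2 else 0) +
          2 * (if i ≠ j then p i * p j / (p i + p j) else 0) := by
    by_cases hij : i = j
    · simp [hij, sq]
    · simp only [ne_eq, hij, not_false_eq_true, if_true, if_false]
      ring
  simp only [fAvg, hsummand, Finset.sum_add_distrib, Finset.sum_sub_distrib, ← Finset.mul_sum,
    Finset.sum_ite_eq, Finset.mem_univ, if_true, sq, Finset.sum_mul_sum]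

theorem concaveOn_fAvg (d : ℕ) : ConcaveOn ℝ (stdSimplex ℝ (Fin d)) fAvg := by
  have hconv := convex_stdSimplex ℝ (Fin d)
  have h := ((concaveOn_neg_sum_sq.subset (subset_univ _) hconv).add
    ((concaveOn_sum_mul_div_add.smul zero_le_two).subset (fun p hp => hp.1) hconv)).add_const 1
  refine h.congr fun p hp => ?_
  simp only [Pi.add_apply, smul_eq_mul, fAvg_eq, hp.2]
  ring

/-- `f` is concave on the probability simplex in `ℝ^d`: for probability
vectors `p, q` and `t ∈ [0,1]`, `f(t p + (1−t) q) ≥ t f(p) + (1−t) f(q)`. -/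
theorem stmt13 (d : ℕ) (p q : Fin d → ℝ)
    (hpnonneg : ∀ i, 0 ≤ p i) (hpsum : ∑ i, p i = 1)
    (hqnonneg : ∀ i, 0 ≤ q i) (hqsum : ∑ i, q i = 1)
    (t : ℝ) (ht0 : 0 ≤ t) (ht1 : t ≤ 1) :
    t * fAvg p + (1 - t) * fAvg q ≤ fAvg (fun i => t * p i + (1 - t) * q i) :=
  (concaveOn_fAvg d).2 ⟨hpnonneg, hpsum⟩ ⟨hqnonneg, hqsum⟩ ht0 (sub_nonneg.2 ht1)
    (add_sub_cancel t 1)
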